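/- arXiv:2207.11657 — 5 statements merged into one kernel-verified Lean document; each statement's English description precedes it below -/
import Mathlib

section
/- For all real numbers p with 0 < p ≤ 1/5 and all real x with 5p ≤ x ≤ 1, the binary Kullback-Leibler divergence satisfies D_KL(x‖p) ≥ (1/2)·x·log(x/p). -/
open Real

/-- log x ≥ 1 - 1/x for x > 0. -/
lemma aux_log_ge_one_sub_inv {x : ℝ} (hx : 0 < x) : 1 - 1/x ≤ Real.log x := by
  have h := Real.log_le_sub_one_of_pos (x := 1/x) (by positivity)
  rw [Real.log_div one_ne_zero (ne_of_gt hx), Real.log_one] at h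
  linarith

lemma aux_log_five : (8:ℝ)/5 ≤ Real.log 5 := by
  rw [Real.le_log_iff_exp_le (by norm_num)]
  have h8 : Real.exp (8/5) ^ 5 = Real.exp 8 := by
    rw [← Real.exp_nat_mul]; norm_num
  have he : Real.exp 8 < 3125 := by
    have h1 : Real.exp 8 = Real.exp 1 ^ 8 := by
      rw [← Real.exp_nat_mul]; norm_num
    have h2 := Real.exp_one_lt_d9
    have h3 : Real.exp 1 ^ 8 < 2.7182818286 ^ 8 :=
      pow_lt_pow_left₀ h2 (le_of_lt (Real.exp_pos 1)) (by norm_num)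
    have h4 : (2.7182818286:ℝ) ^ 8 < 3125 := by norm_num
    linarith
  have hlt : Real.exp (8/5) ^ 5 < 5 ^ 5 := by rw [h8]; norm_num; linarith
  exact le_of_lt (lt_of_pow_lt_pow_left₀ 5 (by norm_num) hlt)

/-- log t ≥ 2 - 2/t for t ≥ 5. -/
lemma aux_log_ge (t : ℝ) (ht : 5 ≤ t) : 2 - 2/t ≤ Real.log t := by
  have ht0 : (0:ℝ) < t := by linarith
  have h1 : Real.log t = Real.log 5 + Real.log (t/5) := by
    rw [← Real.log_mul (by norm_num) (by positivity)]
    congr 1; field_simp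
  have h2 : 1 - 5/t ≤ Real.log (t/5) := by
    have := aux_log_ge_one_sub_inv (x := t/5) (by positivity)
    have : 1/(t/5) = 5/t := by field_simp
    have h := aux_log_ge_one_sub_inv (x := t/5) (by positivity)
    rw [this] at h; exact h
  have h3 := aux_log_five
  have h4 : 3/t ≤ 3/5 := by
    apply div_le_div_of_nonneg_left (by norm_num) (by norm_num) ht
  have h5 : (5:ℝ)/t - 2/t = 3/t := by ring
  linarith

/-- Binary KL divergence lower bound: for 0 < p ≤ 1/5 and 5p ≤ x ≤ 1,
    D_KL(x‖p) ≥ (1/2)·x·log(x/p). -/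
theorem kl_lower_bound (p x : ℝ) (hp0 : 0 < p) (hp : p ≤ 1/5)
    (hx1 : 5 * p ≤ x) (hx2 : x ≤ 1) :
    x * Real.log (x / p) + (1 - x) * Real.log ((1 - x) / (1 - p)) ≥
      (1/2) * (x * Real.log (x / p)) := by
  have hx0 : 0 < x := by linarith
  -- Step 1: (1-x) * log((1-x)/(1-p)) ≥ p - x
  have step1 : p - x ≤ (1 - x) * Real.log ((1 - x) / (1 - p)) := by
    rcases eq_or_lt_of_le hx2 with heq | hlt
    · subst heq; simp; linarith
    · have h1x : 0 < 1 - x := by linarith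
      have h1p : 0 < 1 - p := by linarith
      have h := aux_log_ge_one_sub_inv (x := (1-x)/(1-p)) (by positivity)
      have hinv : 1/((1-x)/(1-p)) = (1-p)/(1-x) := by field_simp
      rw [hinv] at h
      have h2 : (1 - x) * (1 - (1-p)/(1-x)) ≤ (1 - x) * Real.log ((1 - x) / (1 - p)) :=
        mul_le_mul_of_nonneg_left h (le_of_lt h1x)
      have h3 : (1 - x) * (1 - (1-p)/(1-x)) = p - x := by field_simp; ring
      linarith
  -- Step 2: (1/2) * (x * log(x/p)) ≥ x - p
  have ht : 5 ≤ x / p := by rw [le_div_iff₀ hp0]; linarith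
  have step2 : x - p ≤ (1/2) * (x * Real.log (x / p)) := by
    have h := aux_log_ge (x/p) ht
    have h2 : x * (2 - 2/(x/p)) ≤ x * Real.log (x/p) :=
      mul_le_mul_of_nonneg_left h (le_of_lt hx0)
    have h3 : x * (2 - 2/(x/p)) = 2*x - 2*p := by
      field_simp
    linarith
  linarith
end

section
/- For all real numbers p with 0 < p ≤ 1/5, the function h(x) = (x·log(x/p)) / (−(1−x)·log((1−x)/(1−p))) is monotonically increasing on the interval (p, 1). -/
open Real Set

private lemma hasDerivAt_logdiv {p x : ℝ} (hp0 : p ≠ 0) (hx : x ≠ 0) :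
    HasDerivAt (fun y : ℝ => Real.log (y / p)) x⁻¹ x := by
  have h1 : HasDerivAt (fun y : ℝ => y / p) (1 / p) x :=
    (hasDerivAt_id x).div_const p
  have h2 := h1.log (div_ne_zero hx hp0)
  convert h2 using 1
  field_simp

private lemma hasDerivAt_logdiv' {p x : ℝ} (hp1 : (1:ℝ) - p ≠ 0) (hx : (1:ℝ) - x ≠ 0) :
    HasDerivAt (fun y : ℝ => Real.log ((1 - y) / (1 - p))) (-(1 - x)⁻¹) x := by
  have h1 : HasDerivAt (fun y : ℝ => (1 - y) / (1 - p)) (-1 / (1 - p)) x :=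
    (((hasDerivAt_id x).const_sub 1).div_const (1 - p))
  have h2 := h1.log (div_ne_zero hx hp1)
  convert h2 using 1
  field_simp

/-- For 0 < p ≤ 1/5, the function
    h(x) = (x·log(x/p)) / (−(1−x)·log((1−x)/(1−p)))
    is monotonically increasing on (p, 1). -/
theorem h_monotoneOn (p : ℝ) (hp0 : 0 < p) (hp : p ≤ 1/5) :
    MonotoneOn (fun x : ℝ =>
      (x * Real.log (x / p)) / (-((1 - x) * Real.log ((1 - x) / (1 - p)))))
      (Set.Ioo p 1) := by
  have hp1 : p < 1 := lt_of_le_of_lt hp (by norm_num)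
  have h1p : (0:ℝ) < 1 - p := by linarith
  set N : ℝ → ℝ := fun x => x * Real.log (x / p) with hNdef
  set D : ℝ → ℝ := fun x => -((1 - x) * Real.log ((1 - x) / (1 - p))) with hDdef
  -- positivity of N and D on (p,1)
  have hNpos : ∀ x ∈ Ioo p 1, 0 < N x := by
    intro x hx
    have hx0 : 0 < x := hp0.trans hx.1
    have : 0 < Real.log (x / p) := Real.log_pos ((one_lt_div hp0).2 hx.1)
    exact mul_pos hx0 this
  have hDpos : ∀ x ∈ Ioo p 1, 0 < D x := by
    intro x hx
    have h1x : 0 < 1 - x := by linarith [hx.2]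
    have hlt : (1 - x) / (1 - p) < 1 := (div_lt_one h1p).2 (by linarith [hx.1])
    have hlog : Real.log ((1 - x) / (1 - p)) < 0 :=
      Real.log_neg (div_pos h1x h1p) hlt
    have : 0 < (1 - x) * (-Real.log ((1 - x) / (1 - p))) :=
      mul_pos h1x (by linarith)
    simp only [hDdef]
    nlinarith
  -- derivatives of N and D
  have hNderiv : ∀ x ∈ Ioo p 1, HasDerivAt N (Real.log (x / p) + 1) x := by
    intro x hx
    have hx0 : x ≠ 0 := (hp0.trans hx.1).ne'
    have h := (hasDerivAt_id x).mul (hasDerivAt_logdiv hp0.ne' hx0)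
    refine h.congr_deriv ?_
    simp only [id_eq]
    field_simp
  have hDderiv : ∀ x ∈ Ioo p 1, HasDerivAt D (Real.log ((1 - x) / (1 - p)) + 1) x := by
    intro x hx
    have hx1 : (1:ℝ) - x ≠ 0 := by have := hx.2; intro h; nlinarith
    have h := (((hasDerivAt_id x).const_sub 1).mul (hasDerivAt_logdiv' h1p.ne' hx1)).neg
    refine h.congr_deriv ?_
    simp only [id_eq]
    field_simp
    ring
  -- g = N' * D - N * D'
  set g : ℝ → ℝ := fun x =>
    (Real.log (x / p) + 1) * D x - N x * (Real.log ((1 - x) / (1 - p)) + 1) with hgdef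
  have hgderiv : ∀ x ∈ Ioo p 1, HasDerivAt g (D x / x + N x / (1 - x)) x := by
    intro x hx
    have hx0 : x ≠ 0 := (hp0.trans hx.1).ne'
    have hx1 : (1:ℝ) - x ≠ 0 := by have := hx.2; intro h; nlinarith
    have hA : HasDerivAt (fun y : ℝ => Real.log (y / p) + 1) x⁻¹ x :=
      (hasDerivAt_logdiv hp0.ne' hx0).add_const 1
    have hB : HasDerivAt (fun y : ℝ => Real.log ((1 - y) / (1 - p)) + 1) (-(1 - x)⁻¹) x :=
      (hasDerivAt_logdiv' h1p.ne' hx1).add_const 1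
    have h := (hA.mul (hDderiv x hx)).sub ((hNderiv x hx).mul hB)
    refine h.congr_deriv ?_
    field_simp
    ring
  -- g p = 0
  have hgp : g p = 0 := by
    simp [hgdef, hNdef, hDdef, div_self hp0.ne', div_self h1p.ne']
  -- g continuous on Ico p 1
  have c1 : ContinuousOn (fun x : ℝ => Real.log (x / p)) (Ico p 1) := by
    apply ContinuousOn.log (by fun_prop)
    intro x hx
    exact (div_pos (hp0.trans_le hx.1) hp0).ne'
  have c2 : ContinuousOn (fun x : ℝ => Real.log ((1 - x) / (1 - p))) (Ico p 1) := by
    apply ContinuousOn.log (by fun_prop)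
    intro x hx
    have h1x : (0:ℝ) < 1 - x := by linarith [hx.2]
    exact (div_pos h1x h1p).ne'
  have cN : ContinuousOn N (Ico p 1) := (continuous_id.continuousOn).mul c1
  have cD : ContinuousOn D (Ico p 1) :=
    (((continuous_const.sub continuous_id).continuousOn).mul c2).neg
  have cg : ContinuousOn g (Ico p 1) :=
    ((c1.add continuousOn_const).mul cD).sub (cN.mul (c2.add continuousOn_const))
  -- g strictly increasing on Ico p 1, hence positive on Ioo p 1
  have hgmono : StrictMonoOn g (Ico p 1) := by
    apply strictMonoOn_of_deriv_pos (convex_Ico p 1) cg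
    intro x hx
    rw [interior_Ico] at hx
    rw [(hgderiv x hx).deriv]
    have hx0 : 0 < x := hp0.trans hx.1
    have hx1 : (0:ℝ) < 1 - x := by linarith [hx.2]
    have := hNpos x hx
    have := hDpos x hx
    positivity
  have hgpos : ∀ x ∈ Ioo p 1, 0 < g x := by
    intro x hx
    have := hgmono (left_mem_Ico.2 hp1) ⟨hx.1.le, hx.2⟩ hx.1
    linarith [hgp ▸ this]
  -- derivative of h = N/D
  have hhderiv : ∀ x ∈ Ioo p 1, HasDerivAt (fun x => N x / D x) (g x / (D x) ^ 2) x := by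
    intro x hx
    exact (hNderiv x hx).div (hDderiv x hx) (hDpos x hx).ne'
  -- conclude
  apply StrictMonoOn.monotoneOn
  apply strictMonoOn_of_deriv_pos (convex_Ioo p 1)
  · intro x hx
    exact ((hhderiv x hx).differentiableAt.continuousAt).continuousWithinAt
  · intro x hx
    rw [interior_Ioo] at hx
    rw [(hhderiv x hx).deriv]
    have := hgpos x hx
    have := hDpos x hx
    positivity
end

section
/- For all real p with 0 < p ≤ 1/5 and all real x with p ≤ x ≤ 1, the function f(x) = x²·log(x/p) − (1−x)²·log((1−x)/(1−p)) is nonnegative (with the convention that the second term is 0 at x = 1). -/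
open Real

lemma kl_aux (a b : ℝ) (ha : 0 < a) (hb : 0 < b) : a - b ≤ a * Real.log (a / b) := by
  have h := Real.log_le_sub_one_of_pos (div_pos hb ha)
  have hlog : Real.log (a / b) = - Real.log (b / a) := by
    rw [Real.log_div ha.ne' hb.ne', Real.log_div hb.ne' ha.ne']; ring
  have h2 : 1 - b / a ≤ Real.log (a / b) := by rw [hlog]; linarith
  have h3 : a * (1 - b / a) ≤ a * Real.log (a / b) :=
    mul_le_mul_of_nonneg_left h2 ha.le
  have : a * (1 - b / a) = a - b := by field_simp
  linarith

/-- For 0 < p ≤ 1/5 and p ≤ x ≤ 1,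
    f(x) = x²·log(x/p) − (1−x)²·log((1−x)/(1−p)) ≥ 0
    (with the second term vanishing at x = 1, as log 0 = 0 in Lean). -/
theorem f_nonneg (p x : ℝ) (hp0 : 0 < p) (hp : p ≤ 1/5)
    (hx1 : p ≤ x) (hx2 : x ≤ 1) :
    0 ≤ x ^ 2 * Real.log (x / p) - (1 - x) ^ 2 * Real.log ((1 - x) / (1 - p)) := by
  have hp1 : p < 1 := by linarith
  rcases eq_or_lt_of_le hx2 with h1 | h1
  · subst h1
    norm_num
    exact Real.log_nonpos hp0.le hp1.le
  rcases eq_or_lt_of_le hx1 with h2 | h2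
  · subst h2
    rw [div_self hp0.ne', Real.log_one, div_self (by linarith : (1:ℝ) - p ≠ 0), Real.log_one]
    simp
  -- now p < x < 1
  set f : ℝ → ℝ := fun t => t ^ 2 * Real.log (t / p) - (1 - t) ^ 2 * Real.log ((1 - t) / (1 - p)) with hf
  have hx0 : 0 < x := lt_of_lt_of_le hp0 hx1
  have hcont : ContinuousOn f (Set.Icc p x) := by
    apply ContinuousOn.sub
    · apply ContinuousOn.mul (by fun_prop)
      apply ContinuousOn.log (by fun_prop)
      intro t ht
      exact div_ne_zero (by nlinarith [ht.1]) hp0.ne'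
    · apply ContinuousOn.mul (by fun_prop)
      apply ContinuousOn.log (by fun_prop)
      intro t ht
      exact div_ne_zero (by nlinarith [ht.2]) (by linarith)
  have hderiv : ∀ t ∈ Set.Ioo p x, 0 < deriv f t := by
    intro t ht
    have ht0 : 0 < t := lt_of_le_of_lt hp0.le ht.1
    have ht1 : t < 1 := lt_of_lt_of_le ht.2 h1.le
    have ht1' : 0 < 1 - t := by linarith
    -- auxiliary function equal to f near t
    set g : ℝ → ℝ := fun s => s ^ 2 * (Real.log s - Real.log p)
        - (1 - s) ^ 2 * (Real.log (1 - s) - Real.log (1 - p)) with hg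
    have heq : f =ᶠ[nhds t] g := by
      filter_upwards [Ioo_mem_nhds ht0 ht1] with s hs
      have hs0 : (0:ℝ) < s := hs.1
      have hs1 : (0:ℝ) < 1 - s := by linarith [hs.2]
      simp only [hf, hg, Real.log_div hs0.ne' hp0.ne',
        Real.log_div hs1.ne' (by linarith : (1:ℝ) - p ≠ 0)]
    have hd : HasDerivAt g (2 * t * (Real.log t - Real.log p) + t ^ 2 * t⁻¹
        - ((2 * (1 - t) * (-1)) * (Real.log (1 - t) - Real.log (1 - p))
          + (1 - t) ^ 2 * ((1 - t)⁻¹ * (-1)))) t := by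
      have d1 : HasDerivAt (fun s : ℝ => s ^ 2) (2 * t) t := by
        simpa using (hasDerivAt_pow 2 t)
      have d2 : HasDerivAt (fun s : ℝ => Real.log s - Real.log p) t⁻¹ t :=
        (Real.hasDerivAt_log ht0.ne').sub_const _
      have d3 : HasDerivAt (fun s : ℝ => (1 - s) ^ 2) (2 * (1 - t) * (-1)) t := by
        have : HasDerivAt (fun s : ℝ => 1 - s) (-1) t := by
          simpa using (hasDerivAt_id t).const_sub 1
        simpa [Function.comp_def] using ((hasDerivAt_pow 2 (1 - t)).comp t this)
      have d4 : HasDerivAt (fun s : ℝ => Real.log (1 - s) - Real.log (1 - p))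
          ((1 - t)⁻¹ * (-1)) t := by
        have h5 : HasDerivAt (fun s : ℝ => 1 - s) (-1) t := by
          simpa using (hasDerivAt_id t).const_sub 1
        exact (((Real.hasDerivAt_log ht1'.ne').comp t h5)).sub_const _
      exact (d1.mul d2).sub (d3.mul d4)
    have hdf : deriv f t = 2 * t * (Real.log t - Real.log p) + t ^ 2 * t⁻¹
        - ((2 * (1 - t) * (-1)) * (Real.log (1 - t) - Real.log (1 - p))
          + (1 - t) ^ 2 * ((1 - t)⁻¹ * (-1))) :=
      (hd.congr_of_eventuallyEq heq).deriv
    rw [hdf]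
    have e1 : t ^ 2 * t⁻¹ = t := by field_simp
    have e2 : (1 - t) ^ 2 * ((1 - t)⁻¹ * (-1)) = -(1 - t) := by field_simp
    have k1 : t - p ≤ t * Real.log (t / p) := kl_aux t p ht0 hp0
    have k2 : (1 - t) - (1 - p) ≤ (1 - t) * Real.log ((1 - t) / (1 - p)) :=
      kl_aux (1 - t) (1 - p) ht1' (by linarith)
    rw [Real.log_div ht0.ne' hp0.ne'] at k1
    rw [Real.log_div ht1'.ne' (by linarith : (1:ℝ) - p ≠ 0)] at k2
    rw [e1, e2]
    nlinarith [k1, k2]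
  have hmono : StrictMonoOn f (Set.Icc p x) := by
    apply strictMonoOn_of_deriv_pos (convex_Icc p x) hcont
    rwa [interior_Icc]
  have h0 : f p = 0 := by
    simp only [hf, div_self hp0.ne', div_self (by linarith : (1:ℝ) - p ≠ 0), Real.log_one]
    ring
  have := hmono (Set.left_mem_Icc.mpr hx1) (Set.right_mem_Icc.mpr hx1) h2
  rw [h0] at this
  exact this.le
end

section
/- For all real p with 0 < p ≤ 1/5, the function φ(p) = (5p·log 5) / ((1−5p)·log((1−p)/(1−5p))) is monotonically increasing in p on (0, 1/5), and its limit as p → 0⁺ is strictly greater than 2. -/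
open Real Set Filter

-- key inequality: log(1-p) - log(1-5p) ≥ 4p/(1-p)
lemma key_ineq {p : ℝ} (hp0 : 0 < p) (hp : p < 1/5) :
    4*p/(1-p) ≤ Real.log (1-p) - Real.log (1-5*p) := by
  have ha : (0:ℝ) < 1 - p := by linarith
  have hb : (0:ℝ) < 1 - 5*p := by linarith
  have h := Real.log_le_sub_one_of_pos (div_pos hb ha)
  rw [Real.log_div hb.ne' ha.ne'] at h
  have h2 : (1-5*p)/(1-p) = 1 - 4*p/(1-p) := by field_simp; ring
  rw [h2] at h
  linarith

-- derivative helper for log(1 - c p)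
lemma hasDerivAt_log_lin (c p : ℝ) (h : 1 - c*p ≠ 0) :
    HasDerivAt (fun x : ℝ => Real.log (1 - c*x)) (-c/(1 - c*p)) p := by
  have h1 : HasDerivAt (fun x : ℝ => 1 - c*x) (-c) p := by
    simpa using ((hasDerivAt_id p).const_mul c).const_sub 1
  have := (Real.hasDerivAt_log h).comp p h1
  rw [show -c/(1 - c*p) = (1 - c*p)⁻¹ * -c by ring]
  exact this

-- derivative of g p = (1-5p)(log(1-p)-log(1-5p))
lemma hasDerivAt_g {p : ℝ} (ha : 1 - p ≠ 0) (hb : 1 - 5*p ≠ 0) :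
    HasDerivAt (fun x : ℝ => (1 - 5*x) * (Real.log (1-x) - Real.log (1-5*x)))
      ((-5) * (Real.log (1-p) - Real.log (1-5*p)) +
        (1-5*p) * (-1/(1-p) - (-5/(1-5*p)))) p := by
  have h1 : HasDerivAt (fun x : ℝ => 1 - 5*x) (-5) p := by
    simpa using ((hasDerivAt_id p).const_mul (5:ℝ)).const_sub 1
  have h2 := (hasDerivAt_log_lin 1 p (by simpa using ha)).sub (hasDerivAt_log_lin 5 p hb)
  simp only [one_mul] at h2
  exact h1.mul h2

lemma log5_gt : (8:ℝ)/5 < Real.log 5 := by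
  have he : Real.exp 1 < 2.7182818286 := Real.exp_one_lt_d9
  have hp : Real.exp 8 = (Real.exp 1) ^ (8:ℕ) := by
    rw [← Real.exp_nat_mul]; norm_num
  have h8 : Real.exp 8 < 3125 := by
    rw [hp]
    calc (Real.exp 1)^(8:ℕ) < 2.7182818286^(8:ℕ) := by
          apply pow_lt_pow_left₀ he (Real.exp_pos 1).le (by norm_num)
      _ < 3125 := by norm_num
  have : (8:ℝ) < Real.log 3125 := (Real.lt_log_iff_exp_lt (by norm_num)).mpr h8
  have h5 : Real.log 3125 = 5 * Real.log 5 := by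
    rw [show (3125:ℝ) = 5^(5:ℕ) by norm_num, Real.log_pow]; push_cast; ring
  rw [h5] at this; linarith

noncomputable def psi (p : ℝ) : ℝ :=
  (5 * p * Real.log 5) / ((1 - 5*p) * (Real.log (1-p) - Real.log (1-5*p)))

lemma hasDerivAt_psi {p : ℝ} (hp0 : 0 < p) (hp : p < 1/5) :
    HasDerivAt psi
      ((5*Real.log 5 * ((1 - 5*p) * (Real.log (1-p) - Real.log (1-5*p))) -
        (5*p*Real.log 5) * ((-5) * (Real.log (1-p) - Real.log (1-5*p)) +
          (1-5*p) * (-1/(1-p) - (-5/(1-5*p))))) /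
        ((1 - 5*p) * (Real.log (1-p) - Real.log (1-5*p)))^2) p := by
  have ha : (0:ℝ) < 1 - p := by linarith
  have hb : (0:ℝ) < 1 - 5*p := by linarith
  have hL : 0 < Real.log (1-p) - Real.log (1-5*p) := by
    have := key_ineq hp0 hp
    have : 0 < 4*p/(1-p) := by positivity
    linarith [key_ineq hp0 hp]
  have hf : HasDerivAt (fun x : ℝ => 5*x*Real.log 5) (5*Real.log 5) p := by
    simpa using ((hasDerivAt_id p).const_mul (5:ℝ)).mul_const (Real.log 5)
  have hg := hasDerivAt_g ha.ne' hb.ne'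
  exact hf.div hg (by positivity)

lemma psi_deriv_nonneg {p : ℝ} (hp0 : 0 < p) (hp : p < 1/5) :
    0 ≤ (5*Real.log 5 * ((1 - 5*p) * (Real.log (1-p) - Real.log (1-5*p))) -
        (5*p*Real.log 5) * ((-5) * (Real.log (1-p) - Real.log (1-5*p)) +
          (1-5*p) * (-1/(1-p) - (-5/(1-5*p))))) /
        ((1 - 5*p) * (Real.log (1-p) - Real.log (1-5*p)))^2 := by
  have ha : (0:ℝ) < 1 - p := by linarith
  have hb : (0:ℝ) < 1 - 5*p := by linarith
  have hkey := key_ineq hp0 hp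
  set L := Real.log (1-p) - Real.log (1-5*p) with hLdef
  have hnum : 5*Real.log 5 * ((1 - 5*p) * L) -
      (5*p*Real.log 5) * ((-5) * L + (1-5*p) * (-1/(1-p) - (-5/(1-5*p))))
      = 5*Real.log 5 * (L - 4*p/(1-p)) := by
    field_simp
    ring
  rw [hnum]
  have hlog5 : 0 < Real.log 5 := Real.log_pos (by norm_num)
  have : 0 ≤ L - 4*p/(1-p) := by linarith
  positivity

lemma psi_monotone : MonotoneOn psi (Set.Ioo 0 (1/5)) := by
  apply monotoneOn_of_hasDerivWithinAt_nonneg (f' := fun p =>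
      (5*Real.log 5 * ((1 - 5*p) * (Real.log (1-p) - Real.log (1-5*p))) -
        (5*p*Real.log 5) * ((-5) * (Real.log (1-p) - Real.log (1-5*p)) +
          (1-5*p) * (-1/(1-p) - (-5/(1-5*p))))) /
        ((1 - 5*p) * (Real.log (1-p) - Real.log (1-5*p)))^2)
      (convex_Ioo _ _)
  · intro x hx
    exact (hasDerivAt_psi hx.1 hx.2).continuousAt.continuousWithinAt
  · intro x hx
    rw [interior_Ioo] at hx
    exact (hasDerivAt_psi hx.1 hx.2).hasDerivWithinAt
  · intro x hx
    rw [interior_Ioo] at hx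
    exact psi_deriv_nonneg hx.1 hx.2

lemma psi_limit : Filter.Tendsto psi (nhdsWithin 0 (Set.Ioi 0)) (nhds (5 * Real.log 5 / 4)) := by
  have hg0 : HasDerivAt (fun x : ℝ => (1 - 5*x) * (Real.log (1-x) - Real.log (1-5*x))) 4 0 := by
    have := hasDerivAt_g (p := 0) (by norm_num) (by norm_num)
    convert this using 1
    norm_num
  have hs := hasDerivAt_iff_tendsto_slope.mp hg0
  have hmono : nhdsWithin (0:ℝ) (Set.Ioi 0) ≤ nhdsWithin 0 {0}ᶜ :=
    nhdsWithin_mono 0 (fun x hx => ne_of_gt hx)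
  have hslope : Filter.Tendsto
      (fun p : ℝ => ((1 - 5*p) * (Real.log (1-p) - Real.log (1-5*p))) / p)
      (nhdsWithin 0 (Set.Ioi 0)) (nhds 4) := by
    refine (hs.mono_left hmono).congr (fun p => ?_)
    rw [slope_def_field]
    norm_num
  have hT : Filter.Tendsto
      (fun p : ℝ => (5 * Real.log 5) /
        (((1 - 5*p) * (Real.log (1-p) - Real.log (1-5*p))) / p))
      (nhdsWithin 0 (Set.Ioi 0)) (nhds (5 * Real.log 5 / 4)) :=
    tendsto_const_nhds.div hslope (by norm_num)
  refine hT.congr (fun p => ?_)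
  rw [div_div_eq_mul_div]
  unfold psi
  ring

/-- φ(p) = (5p·log 5)/((1−5p)·log((1−p)/(1−5p))) is monotonically increasing
    on (0, 1/5), and its limit as p → 0⁺ is strictly greater than 2
    (the limit equals 5·log 5 / 4). -/
theorem phi_monotone_and_limit :
    MonotoneOn (fun p : ℝ =>
        (5 * p * Real.log 5) / ((1 - 5 * p) * Real.log ((1 - p) / (1 - 5 * p))))
      (Set.Ioo 0 (1/5)) ∧
    Filter.Tendsto (fun p : ℝ =>
        (5 * p * Real.log 5) / ((1 - 5 * p) * Real.log ((1 - p) / (1 - 5 * p))))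
      (nhdsWithin 0 (Set.Ioi 0)) (nhds (5 * Real.log 5 / 4)) ∧
    2 < 5 * Real.log 5 / 4 := by
  have heq : ∀ p ∈ Set.Ioo (0:ℝ) (1/5),
      (5 * p * Real.log 5) / ((1 - 5 * p) * Real.log ((1 - p) / (1 - 5 * p))) = psi p := by
    intro p hp
    have ha : (1:ℝ) - p ≠ 0 := by have := hp.2; intro h; nlinarith [hp.1]
    have hb : (1:ℝ) - 5*p ≠ 0 := by have := hp.2; intro h; nlinarith [hp.1]
    unfold psi
    rw [Real.log_div ha hb]
  refine ⟨?_, ?_, ?_⟩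
  · intro a ha b hb hab
    simp only []
    rw [heq a ha, heq b hb]
    exact psi_monotone ha hb hab
  · have hmem : Set.Ioo (0:ℝ) (1/5) ∈ nhdsWithin (0:ℝ) (Set.Ioi 0) :=
      Ioo_mem_nhdsGT_of_mem (by norm_num)
    refine psi_limit.congr' ?_
    filter_upwards [hmem] with p hp
    exact (heq p hp).symm
  · have := log5_gt
    linarith
end

section
/- Under the assumptions of the robustness analysis, with probability at least 1 − c the lost-value ratio satisfies γ_lost ≤ max{ 5λ^k, λ^(k/2), 4·((log(e/(2π)) − log c)/N_s − log(λ^λ(1−λ)^(1−λ))) / (capPara·γ_v^m·k·log(1/λ)) }. -/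
open Real Nat MeasureTheory ProbabilityTheory
open scoped ENNReal


lemma log_five_gt : (1.6:ℝ) < Real.log 5 := by
  rw [Real.lt_log_iff_exp_lt (by norm_num)]
  have h8 : Real.exp 8 < 3125 := by
    have := Real.exp_one_lt_d9
    calc Real.exp 8 = Real.exp 1 ^ (8:ℕ) := by
          rw [← Real.exp_nat_mul]; norm_num
      _ < 2.7182818286 ^ (8:ℕ) :=
          pow_lt_pow_left₀ this (Real.exp_pos 1).le (by norm_num)
      _ < 3125 := by norm_num
  by_contra hcon
  push_neg at hcon
  have e1 : Real.exp 1.6 * Real.exp 6.4 = Real.exp 8 := by rw [← Real.exp_add]; norm_num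
  have e2 : Real.exp 1.6 * Real.exp 1.6 = Real.exp 3.2 := by rw [← Real.exp_add]; norm_num
  have e3 : Real.exp 3.2 * Real.exp 3.2 = Real.exp 6.4 := by rw [← Real.exp_add]; norm_num
  have h2 : (25:ℝ) ≤ Real.exp 3.2 := by
    rw [← e2]; nlinarith
  have h3 : (625:ℝ) ≤ Real.exp 6.4 := by
    rw [← e3]; nlinarith
  have h4 : (3125:ℝ) ≤ Real.exp 8 := by
    rw [← e1]; nlinarith
  linarith

lemma fact_upper (n : ℕ) (hn : 1 ≤ n) :
    (n ! : ℝ) ≤ Real.exp 1 * Real.sqrt n * ((n:ℝ)/Real.exp 1)^n := by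
  have h := Stirling.stirlingSeq'_antitone (Nat.zero_le (n-1))
  simp only [Function.comp] at h
  rw [Nat.succ_eq_add_one, Nat.sub_add_cancel hn] at h
  rw [Stirling.stirlingSeq_one, Stirling.stirlingSeq] at h
  have hn0 : (0:ℝ) < (n:ℝ) := by exact_mod_cast hn
  have hpos : (0:ℝ) < Real.sqrt (2*n) * ((n:ℝ)/Real.exp 1)^n := by positivity
  rw [div_le_div_iff₀ hpos (by positivity)] at h
  have hs : Real.sqrt (2*(n:ℝ)) = Real.sqrt 2 * Real.sqrt n := Real.sqrt_mul (by norm_num) _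
  have h2 : (0:ℝ) < Real.sqrt 2 := by positivity
  calc (n ! : ℝ) ≤ Real.exp 1 * (Real.sqrt (2*n) * ((n:ℝ)/Real.exp 1)^n) / Real.sqrt 2 := by
        rw [le_div_iff₀ h2]; linarith
    _ = Real.exp 1 * Real.sqrt n * ((n:ℝ)/Real.exp 1)^n := by
        rw [hs]; field_simp

lemma fact_lower (n : ℕ) :
    Real.sqrt π * (Real.sqrt (2*n) * ((n:ℝ)/Real.exp 1)^n) ≤ (n ! : ℝ) := by
  rcases Nat.eq_zero_or_pos n with h | h
  · subst h; simp
  have htd : Filter.Tendsto (Stirling.stirlingSeq ∘ Nat.succ) Filter.atTop (nhds (√π)) := by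
    have := Stirling.tendsto_stirlingSeq_sqrt_pi.comp (Filter.tendsto_add_atTop_nat 1)
    simpa [Function.comp, Nat.succ_eq_add_one] using this
  have hle := Stirling.stirlingSeq'_antitone.le_of_tendsto htd (n-1)
  simp only [Function.comp] at hle
  rw [Nat.succ_eq_add_one, Nat.sub_add_cancel h] at hle
  rw [Stirling.stirlingSeq] at hle
  have hn0 : (0:ℝ) < (n:ℝ) := by exact_mod_cast h
  have hpos : (0:ℝ) < Real.sqrt (2*n) * ((n:ℝ)/Real.exp 1)^n := by positivity
  rw [le_div_iff₀ hpos] at hle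
  linarith

lemma choose_bound (l : ℝ) (hl0 : 0 < l) (hl1 : l < 1) (Ns m : ℕ) (hNs : 0 < Ns)
    (hm : (m:ℝ) = l*Ns) (hvar : 1 ≤ (Ns:ℝ)*l*(1-l)) :
    (Ns.choose m : ℝ) ≤ (Real.exp 1/(2*π)) *
      Real.exp (-(Ns:ℝ)*(l*Real.log l + (1-l)*Real.log (1-l))) := by
  have hNs0 : (0:ℝ) < (Ns:ℝ) := by exact_mod_cast hNs
  have h1l : 0 < 1 - l := by linarith
  have hmle : m ≤ Ns := by
    have : (m:ℝ) ≤ (Ns:ℝ) := by rw [hm]; nlinarith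
    exact_mod_cast this
  set b := Ns - m with hbdef
  have hB : ((b:ℕ):ℝ) = (1-l)*Ns := by
    rw [hbdef, Nat.cast_sub hmle, hm]; ring
  have hA1 : (1:ℝ) ≤ (m:ℝ) := by rw [hm]; nlinarith
  have hB1 : (1:ℝ) ≤ ((b:ℕ):ℝ) := by rw [hB]; nlinarith
  have hm1 : 1 ≤ m := by exact_mod_cast hA1
  have hb1 : 1 ≤ b := by exact_mod_cast hB1
  have key : (Ns.choose m : ℝ) * ((m ! : ℝ) * (b ! : ℝ)) = (Ns ! : ℝ) := by
    rw [← mul_assoc]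
    exact_mod_cast congrArg (Nat.cast (R := ℝ)) (Nat.choose_mul_factorial_mul_factorial hmle)
  have hFU := fact_upper Ns hNs
  have hFa := fact_lower m
  have hFb := fact_lower b
  -- rewrite (a/e)^a = l^a * (Ns/e)^a etc.
  have hea : ((m:ℝ)/Real.exp 1)^m = l^m * ((Ns:ℝ)/Real.exp 1)^m := by
    rw [← mul_pow, hm]; ring_nf
  have heb : (((b:ℕ):ℝ)/Real.exp 1)^b = (1-l)^b * ((Ns:ℝ)/Real.exp 1)^b := by
    rw [← mul_pow, hB]; ring_nf
  have hpowsum : ((Ns:ℝ)/Real.exp 1)^m * ((Ns:ℝ)/Real.exp 1)^b = ((Ns:ℝ)/Real.exp 1)^Ns := by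
    rw [← pow_add, Nat.add_sub_cancel' hmle]
  have hsab : Real.sqrt (2*(m:ℝ)) * Real.sqrt (2*((b:ℕ):ℝ))
      = 2 * (Real.sqrt m * Real.sqrt b) := by
    rw [Real.sqrt_mul (by norm_num) (m:ℝ), Real.sqrt_mul (by norm_num) ((b:ℕ):ℝ)]
    have h22 : Real.sqrt 2 * Real.sqrt 2 = 2 := Real.mul_self_sqrt (by norm_num)
    calc (Real.sqrt 2 * Real.sqrt m) * (Real.sqrt 2 * Real.sqrt b)
        = (Real.sqrt 2 * Real.sqrt 2) * (Real.sqrt m * Real.sqrt b) := by ring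
      _ = 2 * (Real.sqrt m * Real.sqrt b) := by rw [h22]
  have hpipos := Real.pi_pos
  have hsqpi : Real.sqrt π * Real.sqrt π = π := Real.mul_self_sqrt hpipos.le
  -- sqrt Ns ≤ sqrt m * sqrt b
  have hsNs : Real.sqrt Ns ≤ Real.sqrt m * Real.sqrt b := by
    rw [← Real.sqrt_mul (by positivity) ((b:ℕ):ℝ)]
    apply Real.sqrt_le_sqrt
    rw [hm, hB]; nlinarith
  -- main multiplicative bound
  have hpos1 : (0:ℝ) < l^m * (1-l)^b := by positivity
  have hposNse : (0:ℝ) < ((Ns:ℝ)/Real.exp 1)^Ns := by positivity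
  have hsm : (0:ℝ) < Real.sqrt m := by
    apply Real.sqrt_pos.2; linarith
  have hsb : (0:ℝ) < Real.sqrt b := by
    apply Real.sqrt_pos.2; linarith
  have hchoosepos : (0:ℝ) < (Ns.choose m : ℝ) := by
    exact_mod_cast Nat.choose_pos hmle
  have step : (Ns.choose m : ℝ) * (l^m * (1-l)^b) * (2*π*(Real.sqrt m * Real.sqrt b))
      * ((Ns:ℝ)/Real.exp 1)^Ns ≤ Real.exp 1 * Real.sqrt Ns * ((Ns:ℝ)/Real.exp 1)^Ns := by
    calc (Ns.choose m : ℝ) * (l^m * (1-l)^b) * (2*π*(Real.sqrt m * Real.sqrt b))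
        * ((Ns:ℝ)/Real.exp 1)^Ns
        = (Ns.choose m : ℝ) * ((Real.sqrt π * (Real.sqrt (2*(m:ℝ)) * ((m:ℝ)/Real.exp 1)^m))
          * (Real.sqrt π * (Real.sqrt (2*((b:ℕ):ℝ)) * (((b:ℕ):ℝ)/Real.exp 1)^b))) := by
          rw [hea, heb]
          rw [show (Real.sqrt π * (Real.sqrt (2*(m:ℝ)) * (l^m * ((Ns:ℝ)/Real.exp 1)^m)))
            * (Real.sqrt π * (Real.sqrt (2*((b:ℕ):ℝ)) * ((1-l)^b * ((Ns:ℝ)/Real.exp 1)^b)))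
            = (Real.sqrt π * Real.sqrt π) * (Real.sqrt (2*(m:ℝ)) * Real.sqrt (2*((b:ℕ):ℝ)))
              * (l^m * (1-l)^b) * (((Ns:ℝ)/Real.exp 1)^m * ((Ns:ℝ)/Real.exp 1)^b) by ring]
          rw [hsqpi, hsab, hpowsum]; ring
      _ ≤ (Ns.choose m : ℝ) * ((m ! : ℝ) * (b ! : ℝ)) := by
          apply mul_le_mul_of_nonneg_left _ hchoosepos.le
          have p1 : (0:ℝ) ≤ Real.sqrt π * (Real.sqrt (2*(m:ℝ)) * ((m:ℝ)/Real.exp 1)^m) := by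
            positivity
          have p2 : (0:ℝ) ≤ (m ! : ℝ) := by positivity
          exact mul_le_mul hFa hFb (by positivity) p2
      _ = (Ns ! : ℝ) := key
      _ ≤ _ := hFU
  have step2 : (Ns.choose m : ℝ) * (l^m * (1-l)^b) ≤ Real.exp 1 / (2*π) := by
    have h1 : (Ns.choose m : ℝ) * (l^m * (1-l)^b) * (2*π*(Real.sqrt m * Real.sqrt b))
        ≤ Real.exp 1 * Real.sqrt Ns := le_of_mul_le_mul_right step hposNse
    have h2 : Real.exp 1 * Real.sqrt Ns ≤ Real.exp 1 * (Real.sqrt m * Real.sqrt b) :=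
      mul_le_mul_of_nonneg_left hsNs (Real.exp_pos 1).le
    have h3 : (Ns.choose m : ℝ) * (l^m * (1-l)^b) * (2*π) ≤ Real.exp 1 := by
      have hmb : (0:ℝ) < Real.sqrt m * Real.sqrt b := by positivity
      refine le_of_mul_le_mul_right ?_ hmb
      calc (Ns.choose m : ℝ) * (l^m * (1-l)^b) * (2*π) * (Real.sqrt m * Real.sqrt b)
          = (Ns.choose m : ℝ) * (l^m * (1-l)^b) * (2*π*(Real.sqrt m * Real.sqrt b)) := by ring
        _ ≤ Real.exp 1 * Real.sqrt Ns := h1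
        _ ≤ Real.exp 1 * (Real.sqrt m * Real.sqrt b) := h2
    rw [le_div_iff₀ (by positivity : (0:ℝ) < 2*π)]
    exact h3
  have hexp : Real.exp (-(Ns:ℝ)*(l*Real.log l + (1-l)*Real.log (1-l)))
      = (l^m * (1-l)^b)⁻¹ := by
    rw [show -(Ns:ℝ)*(l*Real.log l + (1-l)*Real.log (1-l))
      = -((m:ℝ)*Real.log l + ((b:ℕ):ℝ)*Real.log (1-l)) by rw [hm, hB]; ring]
    rw [Real.exp_neg, Real.exp_add, Real.exp_nat_mul, Real.exp_nat_mul,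
      Real.exp_log hl0, Real.exp_log h1l]
  rw [hexp, ← div_eq_mul_inv, le_div_iff₀ hpos1]
  exact step2

set_option maxHeartbeats 1000000 in
/-- Robustness theorem (Theorem 3): with probability at least 1 − c, for every
    corruption choice the lost-value ratio γ_lost = (number of lost files)/N_v
    satisfies
    γ_lost ≤ max{5λ^k, λ^(k/2),
        4·((log(e/(2π)) − log c)/N_s − log(λ^λ(1−λ)^(1−λ)))/(capPara·γ_v^m·k·log(1/λ))},
    where capPara = N_v^m/N_s and γ_v^m = N_v/N_v^m. -/
theorem robustness_theorem {Ω : Type*} [MeasurableSpace Ω]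
    (μ : Measure Ω) [IsProbabilityMeasure μ]
    (l : ℝ) (hl0 : 0 < l) (hl1 : l < 1)
    (k : ℕ) (hk : 0 < k) (hpk : l ^ k ≤ 1 / 5)
    (Nv Ns m : ℕ) (hNv : 0 < Nv) (hNs : 0 < Ns) (hm : (m : ℝ) = l * Ns)
    (hvar : 1 ≤ (Ns : ℝ) * l * (1 - l))
    (Nvm : ℝ) (hNvm : (Nv : ℝ) ≤ Nvm)
    (c : ℝ) (hc0 : 0 < c) (hc1 : c < 1)
    (X : {A : Finset (Fin Ns) // A.card = m} → Fin Nv → Ω → ℝ)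
    (hmeas : ∀ A i, Measurable (X A i))
    (hber : ∀ A i ω, X A i ω = 0 ∨ X A i ω = 1)
    (hp : ∀ A i, μ {ω | X A i ω = 1} = ENNReal.ofReal (l ^ k))
    (hindep : ∀ A, iIndepFun (X A) μ) :
    ENNReal.ofReal (1 - c) ≤
      μ {ω | ∀ A, (∑ i, X A i ω) / (Nv : ℝ) ≤
        max (5 * l ^ k)
          (max (l ^ ((k : ℝ) / 2))
            (4 * ((Real.log (Real.exp 1 / (2 * Real.pi)) - Real.log c) / Ns
                  - Real.log (l ^ l * (1 - l) ^ (1 - l)))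
              / ((Nvm / Ns) * ((Nv : ℝ) / Nvm) * k * Real.log (1 / l))))} := by
  classical
  set p := l ^ k with hpdef
  have hp0 : 0 < p := pow_pos hl0 k
  have hp1 : p < 1 := by calc p ≤ 1/5 := hpk
                           _ < 1 := by norm_num
  have h1l : 0 < 1 - l := by linarith
  set L : ℝ := (k:ℝ) * Real.log (1/l) with hLdef
  have hLp : L = -Real.log p := by
    rw [hLdef, hpdef, Real.log_pow, one_div, Real.log_inv]; ring
  have hL0 : 0 < L := by
    rw [hLp]; simpa using Real.log_neg hp0 hp1
  set t := max (5 * p)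
          (max (l ^ ((k : ℝ) / 2))
            (4 * ((Real.log (Real.exp 1 / (2 * Real.pi)) - Real.log c) / Ns
                  - Real.log (l ^ l * (1 - l) ^ (1 - l)))
              / ((Nvm / Ns) * ((Nv : ℝ) / Nvm) * k * Real.log (1 / l)))) with htdef
  have ht1 : 5 * p ≤ t := le_max_left _ _
  have hs : Real.sqrt p ≤ t := by
    refine le_trans (le_of_eq ?_) ((le_max_left _ _).trans (le_max_right _ _))
    rw [hpdef, show ((k:ℝ)/2) = (k:ℝ) * (1/2 : ℝ) by ring, Real.rpow_mul hl0.le,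
      Real.rpow_natCast, ← Real.sqrt_eq_rpow]
  have ht0 : 0 < t := lt_of_lt_of_le (by positivity) ht1
  -- denominator simplification and key log inequality
  have hNv0 : (0:ℝ) < (Nv:ℝ) := by exact_mod_cast hNv
  have hNs0 : (0:ℝ) < (Ns:ℝ) := by exact_mod_cast hNs
  have hNvm0 : (0:ℝ) < Nvm := lt_of_lt_of_le hNv0 hNvm
  have hloghh : Real.log (l ^ l * (1 - l) ^ (1 - l))
      = l * Real.log l + (1-l) * Real.log (1-l) := by
    rw [Real.log_mul (by positivity) (by positivity), Real.log_rpow hl0,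
      Real.log_rpow h1l]
  have hmle : m ≤ Ns := by
    have : (m:ℝ) ≤ (Ns:ℝ) := by rw [hm]; nlinarith
    exact_mod_cast this
  have hkey2 : Real.log (Ns.choose m) - Real.log c ≤ (Nv:ℝ) * t * L / 4 := by
    have hcb := choose_bound l hl0 hl1 Ns m hNs hm hvar
    have hcp : (0:ℝ) < (Ns.choose m : ℝ) := by exact_mod_cast Nat.choose_pos hmle
    have hlogcb : Real.log (Ns.choose m) ≤ Real.log (Real.exp 1/(2*π))
        + (-(Ns:ℝ)*(l*Real.log l + (1-l)*Real.log (1-l))) := by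
      calc Real.log (Ns.choose m) ≤ Real.log ((Real.exp 1/(2*π)) *
            Real.exp (-(Ns:ℝ)*(l*Real.log l + (1-l)*Real.log (1-l)))) :=
            Real.log_le_log hcp hcb
        _ = _ := by
            rw [Real.log_mul (by positivity) (Real.exp_ne_zero _), Real.log_exp]
    have hdeq : (Nvm / (Ns:ℝ)) * ((Nv : ℝ) / Nvm) * k * Real.log (1 / l)
        = (Nv:ℝ) * L / Ns := by
      rw [hLdef]; field_simp
    have ht3 : 4 * ((Real.log (Real.exp 1 / (2 * Real.pi)) - Real.log c) / Ns
                  - Real.log (l ^ l * (1 - l) ^ (1 - l)))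
              / ((Nv:ℝ) * L / Ns) ≤ t := by
      refine le_trans (le_of_eq ?_) ((le_max_right _ _).trans (le_max_right _ _))
      rw [hdeq]
    have hdenom : (0:ℝ) < (Nv:ℝ) * L / Ns := by positivity
    have h6 := (div_le_iff₀ hdenom).1 ht3
    have h7 := mul_le_mul_of_nonneg_right h6 hNs0.le
    have e1 : t * ((Nv:ℝ) * L / Ns) * Ns = t * ((Nv:ℝ) * L) := by field_simp
    have e2 : 4 * ((Real.log (Real.exp 1 / (2 * Real.pi)) - Real.log c) / Ns
                  - Real.log (l ^ l * (1 - l) ^ (1 - l))) * Ns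
        = 4 * (Real.log (Real.exp 1 / (2 * Real.pi)) - Real.log c
            - (Ns:ℝ) * (l * Real.log l + (1-l) * Real.log (1-l))) := by
      rw [hloghh]; field_simp
    rw [e1, e2] at h7
    linarith
  clear_value t p L
  clear htdef hpdef hLdef
  -- choose θ
  obtain ⟨θ, hθ0, hkey⟩ : ∃ θ : ℝ, 0 ≤ θ ∧ p * (Real.exp θ - 1) + t * (L/4) ≤ θ * t := by
    have hlog5 := log_five_gt
    by_cases h25 : p ≤ 1/25
    · refine ⟨L/2, by linarith, ?_⟩
      set s := Real.sqrt p with hsdef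
      have hs0 : 0 < s := Real.sqrt_pos.2 hp0
      have hsq : s^2 = p := Real.sq_sqrt hp0.le
      have hs5 : s ≤ 1/5 := by nlinarith [hsq, h25, hs0, sq_nonneg (s - 1/5)]
      have hexpL : Real.exp (L/2) = s⁻¹ := by
        rw [hLp, show -Real.log p / 2 = -(Real.log p / 2) by ring, ← Real.log_sqrt hp0.le,
          Real.exp_neg, Real.exp_log hs0]
      have hlogs : Real.log s ≤ 2*s - 2 := by
        have h5s : Real.log (5*s) ≤ 5*s - 1 := Real.log_le_sub_one_of_pos (by positivity)
        rw [Real.log_mul (by norm_num) hs0.ne'] at h5s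
        linarith
      have hLlow : 4*(1-s) ≤ L := by
        rw [hLp, ← hsq, show (s^2 : ℝ) = s*s by ring, Real.log_mul hs0.ne' hs0.ne']
        linarith
      have hps : p * (s⁻¹ - 1) = s - s^2 := by
        field_simp [← hsq]; rw [← hsq]
      have hmul : s * (1-s) ≤ t * (L/4) :=
        mul_le_mul hs (by linarith) (by linarith) ht0.le
      rw [hexpL, hps]
      nlinarith [hmul]
    · push_neg at h25
      refine ⟨Real.log 5, by linarith, ?_⟩
      have hexp5 : Real.exp (Real.log 5) = 5 := Real.exp_log (by norm_num)
      have hLup : L ≤ 2 * Real.log 5 := by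
        rw [hLp]
        have := Real.log_lt_log (by norm_num : (0:ℝ) < 1/25) h25
        rw [show (1/25 : ℝ) = (5*5)⁻¹ by norm_num, Real.log_inv,
          Real.log_mul (by norm_num) (by norm_num)] at this
        linarith
      have hc4 : (4/5 : ℝ) ≤ Real.log 5 - L/4 := by linarith
      have hmul : (5*p) * (4/5) ≤ t * (Real.log 5 - L/4) :=
        mul_le_mul ht1 hc4 (by norm_num) ht0.le
      rw [hexp5]
      nlinarith
  -- Chernoff per A
  have hbound : ∀ A : {A : Finset (Fin Ns) // A.card = m},
      μ {ω | (Nv:ℝ) * t ≤ ∑ i, X A i ω} ≤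
        ENNReal.ofReal (Real.exp (-((Nv:ℝ) * t * L / 4))) := by
    intro A
    have hS : ∀ i, MeasurableSet {ω | X A i ω = 1} := fun i =>
      hmeas A i (measurableSet_singleton 1)
    have hXind : ∀ i, X A i = Set.indicator {ω | X A i ω = 1} (fun _ => (1:ℝ)) := by
      intro i
      funext ω
      rw [Set.indicator_apply]
      by_cases h : X A i ω = 1
      · simp [Set.mem_setOf_eq, h]
      · simp only [Set.mem_setOf_eq, h, if_false]
        exact (hber A i ω).resolve_right h
    have hXi_int : ∀ i, Integrable (X A i) μ := by
      intro i
      rw [hXind i]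
      exact (integrable_const (1:ℝ)).indicator (hS i)
    have hXi_mean : ∀ i, ∫ ω, X A i ω ∂μ = p := by
      intro i
      conv_lhs => rw [show (fun ω => X A i ω) = X A i from rfl, hXind i]
      rw [MeasureTheory.integral_indicator_const (1:ℝ) (hS i), measureReal_def, hp A i, smul_eq_mul,
        mul_one, ENNReal.toReal_ofReal hp0.le]
    have hexpfun : ∀ i, (fun ω => Real.exp (θ * X A i ω))
        = fun ω => 1 + (Real.exp θ - 1) * X A i ω := by
      intro i
      funext ω
      rcases hber A i ω with h | h <;> rw [h] <;> simp [Real.exp_zero] <;> ring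
    have hXint : ∀ i, Integrable (fun ω => Real.exp (θ * X A i ω)) μ := by
      intro i
      rw [hexpfun i]
      exact (integrable_const (1:ℝ)).add ((hXi_int i).const_mul _)
    have hmgf_i : ∀ i, mgf (X A i) μ θ = 1 + (Real.exp θ - 1) * p := by
      intro i
      rw [mgf, hexpfun i]
      rw [MeasureTheory.integral_add (integrable_const _) ((hXi_int i).const_mul _),
        MeasureTheory.integral_const, MeasureTheory.integral_const_mul, hXi_mean i]
      simp [measure_univ]
    have hSint : Integrable (fun ω => Real.exp (θ * (∑ i, X A i) ω)) μ :=
      (hindep A).integrable_exp_mul_sum (hmeas A) (fun i _ => hXint i)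
    have chern := measure_ge_le_exp_mul_mgf (μ := μ) (X := ∑ i, X A i)
      ((Nv:ℝ) * t) hθ0 hSint
    have hmgfS : mgf (∑ i, X A i) μ θ = (1 + (Real.exp θ - 1) * p)^Nv := by
      rw [(hindep A).mgf_sum (hmeas A) Finset.univ]
      simp [hmgf_i]
    rw [hmgfS] at chern
    have hbase : (0:ℝ) ≤ 1 + (Real.exp θ - 1) * p := by
      have := Real.one_le_exp hθ0
      nlinarith
    have hnum : Real.exp (-θ * ((Nv:ℝ)*t)) * (1 + (Real.exp θ - 1) * p)^Nv
        ≤ Real.exp (-((Nv:ℝ) * t * L / 4)) := by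
      have h1 : (1 + (Real.exp θ - 1) * p)^Nv ≤ Real.exp ((Nv:ℝ) * ((Real.exp θ - 1) * p)) := by
        calc (1 + (Real.exp θ - 1) * p)^Nv ≤ (Real.exp ((Real.exp θ - 1) * p))^Nv := by
              apply pow_le_pow_left₀ hbase
              linarith [Real.add_one_le_exp ((Real.exp θ - 1) * p)]
          _ = Real.exp ((Nv:ℝ) * ((Real.exp θ - 1) * p)) := (Real.exp_nat_mul _ Nv).symm
      calc Real.exp (-θ * ((Nv:ℝ)*t)) * (1 + (Real.exp θ - 1) * p)^Nv
          ≤ Real.exp (-θ * ((Nv:ℝ)*t)) * Real.exp ((Nv:ℝ) * ((Real.exp θ - 1) * p)) :=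
            mul_le_mul_of_nonneg_left h1 (Real.exp_pos _).le
        _ = Real.exp (-θ * ((Nv:ℝ)*t) + (Nv:ℝ) * ((Real.exp θ - 1) * p)) :=
            (Real.exp_add _ _).symm
        _ ≤ Real.exp (-((Nv:ℝ) * t * L / 4)) := by
            apply Real.exp_le_exp.2
            nlinarith [hkey, hNv0.le]
    have hset : {ω | (Nv:ℝ) * t ≤ ∑ i, X A i ω} = {ω | (Nv:ℝ)*t ≤ (∑ i, X A i) ω} := by
      ext ω; simp [Finset.sum_apply]
    rw [hset, ← ENNReal.ofReal_toReal (measure_ne_top μ _)]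
    exact ENNReal.ofReal_le_ofReal (le_trans chern hnum)
  -- union bound and conclusion
  set E := {ω | ∀ A : {A : Finset (Fin Ns) // A.card = m}, (∑ i, X A i ω) / (Nv : ℝ) ≤ t}
    with hEdef
  have hSmeas : ∀ A : {A : Finset (Fin Ns) // A.card = m},
      Measurable (fun ω => ∑ i, X A i ω) := fun A =>
    Finset.measurable_sum Finset.univ (fun i _ => hmeas A i)
  have hEmeas : MeasurableSet E := by
    rw [hEdef, Set.setOf_forall]
    exact MeasurableSet.iInter fun A =>
      measurableSet_le ((hSmeas A).div_const _) measurable_const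
  have hcompl : Eᶜ ⊆ ⋃ A : {A : Finset (Fin Ns) // A.card = m},
      {ω | (Nv:ℝ) * t ≤ ∑ i, X A i ω} := by
    intro ω hω
    simp only [hEdef, Set.mem_compl_iff, Set.mem_setOf_eq, not_forall] at hω
    obtain ⟨A, hA⟩ := hω
    push_neg at hA
    refine Set.mem_iUnion.2 ⟨A, ?_⟩
    simp only [Set.mem_setOf_eq]
    rw [lt_div_iff₀ hNv0] at hA
    linarith
  have hcard : (Fintype.card {A : Finset (Fin Ns) // A.card = m} : ℝ) = (Ns.choose m : ℝ) := by
    rw [Fintype.card_finset_len, Fintype.card_fin]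
  have hfinal : (Ns.choose m : ℝ) * Real.exp (-((Nv:ℝ) * t * L / 4)) ≤ c := by
    have hcp : (0:ℝ) < (Ns.choose m : ℝ) := by exact_mod_cast Nat.choose_pos hmle
    calc (Ns.choose m : ℝ) * Real.exp (-((Nv:ℝ) * t * L / 4))
        = Real.exp (Real.log (Ns.choose m) - (Nv:ℝ) * t * L / 4) := by
          rw [Real.exp_sub, Real.exp_log hcp, Real.exp_neg]; ring
      _ ≤ Real.exp (Real.log c) := by
          apply Real.exp_le_exp.2; linarith
      _ = c := Real.exp_log hc0
  have hEc : μ Eᶜ ≤ ENNReal.ofReal c := by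
    calc μ Eᶜ ≤ μ (⋃ A : {A : Finset (Fin Ns) // A.card = m},
          {ω | (Nv:ℝ) * t ≤ ∑ i, X A i ω}) := measure_mono hcompl
      _ ≤ ∑ A : {A : Finset (Fin Ns) // A.card = m},
          μ {ω | (Nv:ℝ) * t ≤ ∑ i, X A i ω} := measure_iUnion_fintype_le μ _
      _ ≤ ∑ _A : {A : Finset (Fin Ns) // A.card = m},
          ENNReal.ofReal (Real.exp (-((Nv:ℝ) * t * L / 4))) :=
          Finset.sum_le_sum (fun A _ => hbound A)
      _ = (Fintype.card {A : Finset (Fin Ns) // A.card = m}) *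
          ENNReal.ofReal (Real.exp (-((Nv:ℝ) * t * L / 4))) := by
          rw [Finset.sum_const, Finset.card_univ, nsmul_eq_mul]
      _ ≤ ENNReal.ofReal c := by
          rw [show ((Fintype.card {A : Finset (Fin Ns) // A.card = m}) : ℝ≥0∞)
            = ENNReal.ofReal ((Fintype.card {A : Finset (Fin Ns) // A.card = m}) : ℝ) by
              rw [ENNReal.ofReal_natCast],
            ← ENNReal.ofReal_mul (by positivity)]
          apply ENNReal.ofReal_le_ofReal
          rw [hcard]
          exact hfinal
  have hE : μ E = 1 - μ Eᶜ := by
    have h := prob_compl_eq_one_sub (μ := μ) hEmeas.compl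
    rwa [compl_compl] at h
  rw [hE]
  calc ENNReal.ofReal (1 - c) = 1 - ENNReal.ofReal c := by
        rw [ENNReal.ofReal_sub 1 hc0.le, ENNReal.ofReal_one]
    _ ≤ 1 - μ Eᶜ := tsub_le_tsub_left hEc 1
end
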